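/- C^m Approximation Lemma: For each integer m ≥ 1 and each M > 0 there exist constants ε_M > 0 and C_M > 0 such that the following holds for all ε ≤ ε_M. Let Δ₁, Δ₂, …, Δ_{n+1} be closed intervals on the line or on the circle, and for each 1 ≤ i ≤ n let f_i, g_i ∈ C^m(Δ_i, Δ_{i+1}) be such that (a) for all 1 ≤ j ≤ k ≤ n, ‖f_k∘f_{k-1}∘⋯∘f_j‖_m ≤ M on Δ_j, and (b) Σ_{i=1}^{n}‖f_i − g_i‖_m < ε. Then for all k ≤ n one has ‖g_k∘g_{k-1}∘⋯∘g₁‖_{m-1} ≤ 2M on Δ₁, and moreover ‖f_k∘f_{k-1}∘⋯∘f₁ − g_k∘g_{k-1}∘⋯∘g₁‖_{m-1} ≤ C_M·Σ_{j=1}^{k}‖f_j − g_j‖_m. -/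

import Mathlib

/-- The `C^m` norm of `f` on a set `I`: `‖f‖ₘ = max{‖D^i f‖₀ : 0 ≤ i ≤ m}` (as a sup). -/
noncomputable def cknorm (m : ℕ) (I : Set ℝ) (f : ℝ → ℝ) : ℝ :=
  sSup ((fun p : ℕ × ℝ => |iteratedDeriv p.1 f p.2|) '' (Set.Iic m ×ˢ I))

/-- `chainFrom f j c = f_{j+c} ∘ ⋯ ∘ f_{j+1} ∘ f_j`. -/
noncomputable def chainFrom (f : ℕ → ℝ → ℝ) (j : ℕ) : ℕ → ℝ → ℝ
  | 0 => f j
  | c + 1 => f (j + c + 1) ∘ chainFrom f j c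


open Set

open Set

-- basic derivative helpers
lemma cd_deriv {i : ℕ} {f : ℝ → ℝ} (h : ContDiff ℝ ((i+1 : ℕ)) f) :
    ContDiff ℝ (i : ℕ) (deriv f) := by
  have : ((i+1 : ℕ) : WithTop ℕ∞) = (i : WithTop ℕ∞) + 1 := by push_cast; ring
  rw [this, contDiff_succ_iff_deriv] at h
  exact h.2.2

lemma cd_diffble {i : ℕ} {f : ℝ → ℝ} (h : ContDiff ℝ ((i+1 : ℕ)) f) :
    Differentiable ℝ f :=
  h.differentiable (by simp)

lemma deriv_comp_fun {u v : ℝ → ℝ} (hu : Differentiable ℝ u) (hv : Differentiable ℝ v) :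
    deriv (fun x => u (v x)) = fun x => deriv u (v x) * deriv v x := by
  funext x
  exact deriv_comp x (hu _) (hv _)

lemma iteratedDeriv_zero_fun {t : ℕ} : iteratedDeriv t (fun _ : ℝ => (0:ℝ)) = fun _ => 0 := by
  induction t with
  | zero => simp
  | succ t ih => rw [iteratedDeriv_succ', show deriv (fun _ : ℝ => (0:ℝ)) = fun _ => 0 by
      funext x; simp, ih]

lemma iteratedDeriv_add_apply' {t : ℕ} {p q : ℝ → ℝ} (hp : ContDiff ℝ (t : ℕ) p)
    (hq : ContDiff ℝ (t : ℕ) q) (x : ℝ) :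
    iteratedDeriv t (fun y => p y + q y) x = iteratedDeriv t p x + iteratedDeriv t q x := by
  rw [← iteratedDerivWithin_univ, ← iteratedDerivWithin_univ, ← iteratedDerivWithin_univ]
  exact iteratedDerivWithin_add (Set.mem_univ x) uniqueDiffOn_univ hp.contDiffAt.contDiffWithinAt hq.contDiffAt.contDiffWithinAt

lemma iteratedDeriv_sub_apply' {t : ℕ} {p q : ℝ → ℝ} (hp : ContDiff ℝ (t : ℕ) p)
    (hq : ContDiff ℝ (t : ℕ) q) (x : ℝ) :
    iteratedDeriv t (fun y => p y - q y) x = iteratedDeriv t p x - iteratedDeriv t q x := by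
  rw [← iteratedDerivWithin_univ, ← iteratedDerivWithin_univ, ← iteratedDerivWithin_univ]
  exact iteratedDerivWithin_sub (Set.mem_univ x) uniqueDiffOn_univ hp.contDiffAt.contDiffWithinAt hq.contDiffAt.contDiffWithinAt

lemma iteratedDeriv_sum_apply' {ι : Type*} (s : Finset ι) (F : ι → ℝ → ℝ) (t : ℕ)
    (h : ∀ i ∈ s, ContDiff ℝ (t : ℕ) (F i)) (x : ℝ) :
    iteratedDeriv t (fun y => ∑ i ∈ s, F i y) x = ∑ i ∈ s, iteratedDeriv t (F i) x := by
  classical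
  induction s using Finset.induction with
  | empty => simp [iteratedDeriv_zero_fun]
  | insert _ _ ha ih =>
    rename_i a s
    simp only [Finset.sum_insert ha]
    rw [iteratedDeriv_add_apply' (h a (Finset.mem_insert_self a s))
      (ContDiff.sum fun i hi => h i (Finset.mem_insert_of_mem hi)) x,
      ih fun i hi => h i (Finset.mem_insert_of_mem hi)]

lemma abs_iteratedDeriv_mul_le {p q : ℝ → ℝ} {s : ℕ} (hp : ContDiff ℝ (s : ℕ) p)
    (hq : ContDiff ℝ (s : ℕ) q) (x : ℝ) {P Q : ℝ}
    (hP : ∀ t ≤ s, |iteratedDeriv t p x| ≤ P) (hQ : ∀ t ≤ s, |iteratedDeriv t q x| ≤ Q)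
    (hP0 : 0 ≤ P) (hQ0 : 0 ≤ Q) :
    |iteratedDeriv s (fun y => p y * q y) x| ≤ 2 ^ s * (P * Q) := by
  have h := norm_iteratedFDeriv_mul_le (𝕜 := ℝ) hp hq x (le_refl (s : WithTop ℕ∞))
  rw [norm_iteratedFDeriv_eq_norm_iteratedDeriv, Real.norm_eq_abs] at h
  refine h.trans ?_
  have : ∀ i ∈ Finset.range (s+1),
      (s.choose i : ℝ) * ‖iteratedFDeriv ℝ i p x‖ * ‖iteratedFDeriv ℝ (s - i) q x‖ ≤
        (s.choose i : ℝ) * (P * Q) := by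
    intro i hi
    rw [norm_iteratedFDeriv_eq_norm_iteratedDeriv, norm_iteratedFDeriv_eq_norm_iteratedDeriv,
      Real.norm_eq_abs, Real.norm_eq_abs]
    have h1 := hP i (by simp at hi; omega)
    have h2 := hQ (s - i) (by omega)
    have : |iteratedDeriv i p x| * |iteratedDeriv (s-i) q x| ≤ P * Q :=
      mul_le_mul h1 h2 (abs_nonneg _) hP0
    nlinarith [Nat.cast_nonneg (α := ℝ) (s.choose i), abs_nonneg (iteratedDeriv i p x),
      abs_nonneg (iteratedDeriv (s-i) q x)]
  refine (Finset.sum_le_sum this).trans ?_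
  rw [← Finset.sum_mul]
  have h2 : ∑ i ∈ Finset.range (s+1), (s.choose i : ℝ) = 2 ^ s := by
    exact_mod_cast Nat.sum_range_choose s
  rw [h2]


noncomputable def ccomp : ℕ → ℝ → ℝ
  | 0, _ => 1
  | i+1, B => ccomp i B * (1 + 2 ^ i * B)

noncomputable def ldiff : ℕ → ℝ → ℝ → ℝ
  | 0, A, _ => A
  | i+1, A, B => ldiff i A B * (1 + 2 ^ i * B) + 2 ^ i * A * ccomp i B

lemma one_le_ccomp (i : ℕ) {B : ℝ} (hB : 0 ≤ B) : 1 ≤ ccomp i B := by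
  induction i with
  | zero => simp [ccomp]
  | succ i ih =>
    rw [ccomp]
    nlinarith [pow_pos (by norm_num : (0:ℝ) < 2) i, mul_nonneg (pow_nonneg (by norm_num : (0:ℝ) ≤ 2) i) hB]

lemma ccomp_nonneg (i : ℕ) {B : ℝ} (hB : 0 ≤ B) : 0 ≤ ccomp i B :=
  le_trans zero_le_one (one_le_ccomp i hB)

lemma ldiff_nonneg (i : ℕ) {A B : ℝ} (hA : 0 ≤ A) (hB : 0 ≤ B) : 0 ≤ ldiff i A B := by
  induction i with
  | zero => simpa [ldiff]
  | succ i ih =>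
    rw [ldiff]
    have := ccomp_nonneg i hB
    positivity

lemma ldiff_le_succ (i : ℕ) {A B : ℝ} (hA : 0 ≤ A) (hB : 0 ≤ B) :
    ldiff i A B ≤ ldiff (i+1) A B := by
  rw [ldiff]
  nlinarith [ldiff_nonneg i hA hB, ccomp_nonneg i hB, pow_pos (by norm_num : (0:ℝ) < 2) i,
    mul_nonneg (pow_nonneg (by norm_num : (0:ℝ) ≤ 2) i) hB,
    mul_nonneg (mul_nonneg (pow_nonneg (by norm_num : (0:ℝ) ≤ 2) i) hA) (ccomp_nonneg i hB),
    mul_nonneg (ldiff_nonneg i hA hB) (mul_nonneg (pow_nonneg (by norm_num : (0:ℝ) ≤ 2) i) hB)]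

lemma le_ccomp_self (i : ℕ) {A B : ℝ} (hA : 0 ≤ A) (hB : 0 ≤ B) : A ≤ A * ccomp i B :=
  le_mul_of_one_le_right hA (one_le_ccomp i hB)

-- cknorm lemmas

lemma cknorm_nonneg (m : ℕ) (I : Set ℝ) (f : ℝ → ℝ) : 0 ≤ cknorm m I f := by
  apply Real.sSup_nonneg
  rintro x ⟨p, _, rfl⟩
  exact abs_nonneg _

lemma cknorm_le {m : ℕ} {I : Set ℝ} {f : ℝ → ℝ} {c : ℝ} (h0 : 0 ≤ c)
    (h : ∀ t ≤ m, ∀ x ∈ I, |iteratedDeriv t f x| ≤ c) : cknorm m I f ≤ c := by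
  apply Real.sSup_le _ h0
  rintro y ⟨⟨t, x⟩, ⟨ht, hx⟩, rfl⟩
  exact h t ht x hx

lemma le_cknorm {m : ℕ} {a b : ℝ} {f : ℝ → ℝ} (hf : ContDiff ℝ (m : ℕ) f)
    {t : ℕ} {x : ℝ} (ht : t ≤ m) (hx : x ∈ Icc a b) :
    |iteratedDeriv t f x| ≤ cknorm m (Icc a b) f := by
  have hb : ∀ s ∈ Finset.range (m+1), ∃ C, ∀ y ∈ Icc a b, |iteratedDeriv s f y| ≤ C := by
    intro s hs
    have hc : Continuous (iteratedDeriv s f) :=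
      hf.continuous_iteratedDeriv s (by exact_mod_cast Finset.mem_range_succ_iff.mp hs)
    obtain ⟨C, hC⟩ := isCompact_Icc.exists_bound_of_continuousOn hc.continuousOn
    exact ⟨C, fun y hy => by simpa [Real.norm_eq_abs] using hC y hy⟩
  choose Cf hCf using hb
  apply le_csSup
  · refine ⟨(Finset.range (m+1)).sup' ⟨0, by simp⟩ (fun s => if h : s ∈ Finset.range (m+1) then Cf s h else 0), ?_⟩
    rintro y ⟨⟨s, z⟩, ⟨hs, hz⟩, rfl⟩
    have hs' : s ∈ Finset.range (m+1) := Finset.mem_range_succ_iff.mpr hs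
    have := hCf s hs' z hz
    refine this.trans ?_
    have := Finset.le_sup' (f := fun s => if h : s ∈ Finset.range (m+1) then Cf s h else 0) hs'
    simpa [hs'] using this
  · exact ⟨(t, x), ⟨ht, hx⟩, rfl⟩


lemma abs_sub_le' (a b : ℝ) : |a - b| ≤ |a| + |b| := by
  rw [sub_eq_add_neg]
  exact (abs_add_le _ _).trans (by rw [abs_neg])

lemma comp_bound (i : ℕ) :
    ∀ (u v : ℝ → ℝ) (I J : Set ℝ) (A B : ℝ),
      ContDiff ℝ (i : ℕ) u → ContDiff ℝ (i : ℕ) v → MapsTo v I J →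
      (∀ t ≤ i, ∀ y ∈ J, |iteratedDeriv t u y| ≤ A) →
      (∀ t, 1 ≤ t → t ≤ i → ∀ x ∈ I, |iteratedDeriv t v x| ≤ B) →
      0 ≤ A → 0 ≤ B →
      ∀ t ≤ i, ∀ x ∈ I, |iteratedDeriv t (fun x => u (v x)) x| ≤ A * ccomp i B := by
  induction i with
  | zero =>
    intro u v I J A B hu hv hmap hA hB hA0 hB0 t ht x hx
    interval_cases t
    simpa [iteratedDeriv_zero, ccomp] using hA 0 (by omega) _ (hmap hx)
  | succ i ih =>
    intro u v I J A B hu hv hmap hA hB hA0 hB0 t ht x hx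
    have hvi : ContDiff ℝ (i : ℕ) v := hv.of_le (by exact_mod_cast Nat.le_succ i)
    match t with
    | 0 =>
      simpa [iteratedDeriv_zero] using
        (hA 0 (by omega) _ (hmap hx)).trans (le_ccomp_self (i+1) hA0 hB0)
    | (s+1) =>
      have hs : s ≤ i := by omega
      have hu' : ContDiff ℝ (i : ℕ) (deriv u) := cd_deriv hu
      have hv' : Differentiable ℝ v := cd_diffble hv
      have hud : Differentiable ℝ u := cd_diffble hu
      rw [iteratedDeriv_succ', deriv_comp_fun hud hv']
      have IH := ih (deriv u) v I J A B hu' hvi hmap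
        (fun t' ht' y hy => by
          rw [← iteratedDeriv_succ']; exact hA (t'+1) (by omega) y hy)
        (fun t' h1 h2 x' hx' => hB t' h1 (by omega) x' hx') hA0 hB0
      have lb := abs_iteratedDeriv_mul_le
        (p := fun x => deriv u (v x)) (q := deriv v) (s := s)
        ((hu'.comp hvi).of_le (by exact_mod_cast hs))
        ((cd_deriv hv).of_le (by exact_mod_cast hs)) x
        (fun t' ht' => IH t' (by omega) x hx)
        (fun t' ht' => by
          rw [← iteratedDeriv_succ']
          exact hB (t'+1) (by omega) (by omega) x hx)
        (mul_nonneg hA0 (ccomp_nonneg i hB0)) hB0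
      refine lb.trans ?_
      rw [ccomp]
      have h1 : (2:ℝ)^s ≤ 2^i := pow_le_pow_right₀ (by norm_num) hs
      nlinarith [ccomp_nonneg i hB0, mul_nonneg (mul_nonneg hA0 (ccomp_nonneg i hB0)) hB0,
        pow_pos (by norm_num : (0:ℝ) < 2) i, pow_pos (by norm_num : (0:ℝ) < 2) s]

lemma diff_bound (i : ℕ) :
    ∀ (u v w : ℝ → ℝ) (I J : Set ℝ) (A B δ : ℝ),
      Convex ℝ J →
      ContDiff ℝ ((i+1 : ℕ)) u → ContDiff ℝ (i : ℕ) v → ContDiff ℝ (i : ℕ) w →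
      MapsTo v I J → MapsTo w I J →
      (∀ t, 1 ≤ t → t ≤ i+1 → ∀ y ∈ J, |iteratedDeriv t u y| ≤ A) →
      (∀ t, 1 ≤ t → t ≤ i → ∀ x ∈ I, |iteratedDeriv t v x| ≤ B) →
      (∀ t, 1 ≤ t → t ≤ i → ∀ x ∈ I, |iteratedDeriv t w x| ≤ B) →
      (∀ t ≤ i, ∀ x ∈ I, |iteratedDeriv t (fun x => v x - w x) x| ≤ δ) →
      0 ≤ A → 0 ≤ B → 0 ≤ δ →
      ∀ t ≤ i, ∀ x ∈ I, |iteratedDeriv t (fun x => u (v x) - u (w x)) x| ≤ ldiff i A B * δ := by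
  induction i with
  | zero =>
    intro u v w I J A B δ hJ hu hv hw hmv hmw hA hBv hBw hδ hA0 hB0 hδ0 t ht x hx
    interval_cases t
    simp only [iteratedDeriv_zero]
    have hud : Differentiable ℝ u := cd_diffble hu
    have mvt := hJ.norm_image_sub_le_of_norm_deriv_le (f := u) (C := A)
      (fun y _ => hud y) (fun y hy => by
        rw [Real.norm_eq_abs, ← iteratedDeriv_one]
        exact hA 1 le_rfl (by omega) y hy) (hmw hx) (hmv hx)
    rw [Real.norm_eq_abs, Real.norm_eq_abs] at mvt
    refine mvt.trans ?_
    have h0 := hδ 0 (by omega) x hx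
    simp only [iteratedDeriv_zero] at h0
    show A * |v x - w x| ≤ ldiff 0 A B * δ
    rw [ldiff]
    exact mul_le_mul_of_nonneg_left h0 hA0
  | succ i ih =>
    intro u v w I J A B δ hJ hu hv hw hmv hmw hA hBv hBw hδ hA0 hB0 hδ0 t ht x hx
    have hvi : ContDiff ℝ (i : ℕ) v := hv.of_le (by exact_mod_cast Nat.le_succ i)
    have hwi : ContDiff ℝ (i : ℕ) w := hw.of_le (by exact_mod_cast Nat.le_succ i)
    by_cases hti : t ≤ i
    · have := ih u v w I J A B δ hJ (hu.of_le (by exact_mod_cast Nat.succ_le_succ (Nat.le_succ i)))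
        hvi hwi hmv hmw
        (fun t' h1 h2 y hy => hA t' h1 (by omega) y hy)
        (fun t' h1 h2 x' hx' => hBv t' h1 (by omega) x' hx')
        (fun t' h1 h2 x' hx' => hBw t' h1 (by omega) x' hx')
        (fun t' h' x' hx' => hδ t' (by omega) x' hx') hA0 hB0 hδ0 t hti x hx
      exact this.trans (mul_le_mul_of_nonneg_right (ldiff_le_succ i hA0 hB0) hδ0)
    · have hteq : t = i + 1 := by omega
      subst hteq
      have hud : Differentiable ℝ u := cd_diffble hu
      have hvd : Differentiable ℝ v := cd_diffble hv
      have hwd : Differentiable ℝ w := cd_diffble hw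
      have du : ContDiff ℝ ((i+1 : ℕ)) (deriv u) := cd_deriv hu
      have dui : ContDiff ℝ (i : ℕ) (deriv u) := du.of_le (by exact_mod_cast Nat.le_succ i)
      have dv : ContDiff ℝ (i : ℕ) (deriv v) := cd_deriv hv
      have dw : ContDiff ℝ (i : ℕ) (deriv w) := cd_deriv hw
      have hder : deriv (fun x => u (v x) - u (w x)) =
          fun x => ((deriv u (v x) - deriv u (w x)) * deriv v x
            + deriv u (w x) * (deriv v x - deriv w x)) := by
        funext y
        have hc1 : DifferentiableAt ℝ (fun x => u (v x)) y := (hud (v y)).comp y (hvd y)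
        have hc2 : DifferentiableAt ℝ (fun x => u (w x)) y := (hud (w y)).comp y (hwd y)
        rw [deriv_fun_sub hc1 hc2, deriv_comp_fun hud hvd, deriv_comp_fun hud hwd]
        ring
      rw [iteratedDeriv_succ', hder]
      have hP1 : ContDiff ℝ (i : ℕ) (fun x => (deriv u (v x) - deriv u (w x)) * deriv v x) :=
        (((dui.comp hvi).sub (dui.comp hwi)).mul dv)
      have hP2 : ContDiff ℝ (i : ℕ) (fun x => deriv u (w x) * (deriv v x - deriv w x)) :=
        ((dui.comp hwi).mul (dv.sub dw))
      rw [iteratedDeriv_add_apply' hP1 hP2 x]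
      have hq_eq : (fun x => deriv v x - deriv w x) = deriv (fun x => v x - w x) := by
        funext y; rw [deriv_fun_sub (hvd y) (hwd y)]
      -- bound for the first product
      have IH := ih (deriv u) v w I J A B δ hJ du hvi hwi hmv hmw
        (fun t' h1 h2 y hy => by
          rw [← iteratedDeriv_succ']; exact hA (t'+1) (by omega) (by omega) y hy)
        (fun t' h1 h2 x' hx' => hBv t' h1 (by omega) x' hx')
        (fun t' h1 h2 x' hx' => hBw t' h1 (by omega) x' hx')
        (fun t' h' x' hx' => hδ t' (by omega) x' hx') hA0 hB0 hδ0
      have b1 := abs_iteratedDeriv_mul_le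
        (p := fun x => deriv u (v x) - deriv u (w x)) (q := deriv v) (s := i)
        ((dui.comp hvi).sub (dui.comp hwi)) dv x
        (fun t' ht' => IH t' ht' x hx)
        (fun t' ht' => by
          rw [← iteratedDeriv_succ']
          exact hBv (t'+1) (by omega) (by omega) x hx)
        (mul_nonneg (ldiff_nonneg i hA0 hB0) hδ0) hB0
      -- bound for the second product
      have CB := comp_bound i (deriv u) w I J A B dui hwi hmw
        (fun t' ht' y hy => by
          rw [← iteratedDeriv_succ']; exact hA (t'+1) (by omega) (by omega) y hy)
        (fun t' h1 h2 x' hx' => hBw t' h1 (by omega) x' hx') hA0 hB0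
      have b2 := abs_iteratedDeriv_mul_le
        (p := fun x => deriv u (w x)) (q := fun x => deriv v x - deriv w x) (s := i)
        (dui.comp hwi) (dv.sub dw) x
        (fun t' ht' => CB t' ht' x hx)
        (fun t' ht' => by
          rw [hq_eq, ← iteratedDeriv_succ']
          exact hδ (t'+1) (by omega) x hx)
        (mul_nonneg hA0 (ccomp_nonneg i hB0)) hδ0
      refine (abs_add_le _ _).trans ?_
      refine (add_le_add b1 b2).trans ?_
      rw [ldiff]
      nlinarith [ldiff_nonneg i hA0 hB0, ccomp_nonneg i hB0,
        pow_pos (by norm_num : (0:ℝ) < 2) i,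
        mul_nonneg (ldiff_nonneg i hA0 hB0) hδ0]

noncomputable def ech (f : ℕ → ℝ → ℝ) (j : ℕ) : ℕ → ℝ → ℝ
  | 0 => id
  | c+1 => f (j + c) ∘ ech f j c

lemma ech_one (f : ℕ → ℝ → ℝ) (j : ℕ) : ech f j 1 = f j := by
  funext x; simp [ech]

lemma ech_succ_chain (f : ℕ → ℝ → ℝ) (j c : ℕ) : ech f j (c+1) = chainFrom f j c := by
  induction c with
  | zero => simpa [chainFrom] using ech_one f j
  | succ c ih =>
    show f (j + (c+1)) ∘ ech f j (c+1) = chainFrom f j (c+1)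
    rw [ih]
    rfl

lemma ech_split (f : ℕ → ℝ → ℝ) (j c : ℕ) : ech f j (c+1) = ech f (j+1) c ∘ f j := by
  induction c with
  | zero => funext x; simp [ech]
  | succ c ih =>
    show f (j + (c+1)) ∘ ech f j (c+1) = ech f (j+1) (c+1) ∘ f j
    rw [ih]
    show f (j + (c+1)) ∘ (ech f (j+1) c ∘ f j) = (f ((j+1) + c) ∘ ech f (j+1) c) ∘ f j
    rw [show (j+1) + c = j + (c+1) from by omega]
    rfl

lemma ech_contDiff {m : ℕ} (f : ℕ → ℝ → ℝ) (j c : ℕ)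
    (h : ∀ i, j ≤ i → i < j + c → ContDiff ℝ (m : ℕ) (f i)) :
    ContDiff ℝ (m : ℕ) (ech f j c) := by
  induction c with
  | zero => exact contDiff_id
  | succ c ih =>
    exact (h (j+c) (by omega) (by omega)).comp
      (ih fun i h1 h2 => h i h1 (by omega))

lemma ech_maps (F : ℕ → ℝ → ℝ) (lo hi : ℕ → ℝ) (j c : ℕ)
    (h : ∀ i, j ≤ i → i < j + c →
      MapsTo (F i) (Icc (lo i) (hi i)) (Icc (lo (i+1)) (hi (i+1)))) :
    MapsTo (ech F j c) (Icc (lo j) (hi j)) (Icc (lo (j+c)) (hi (j+c))) := by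
  induction c with
  | zero => exact fun x hx => hx
  | succ c ih =>
    exact (h (j+c) (by omega) (by omega)).comp
      (ih fun i h1 h2 => h i h1 (by omega))

lemma iteratedDeriv_const_fun (s : ℕ) (c : ℝ) :
    iteratedDeriv (s+1) (fun _ : ℝ => c) = fun _ => 0 := by
  rw [iteratedDeriv_succ', show deriv (fun _ : ℝ => c) = fun _ : ℝ => (0:ℝ) from
    funext fun x => deriv_const x c, iteratedDeriv_zero_fun]

lemma abs_iteratedDeriv_id_le {t : ℕ} (h1 : 1 ≤ t) {C : ℝ} (hC : 1 ≤ C) (x : ℝ) :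
    |iteratedDeriv t (id : ℝ → ℝ) x| ≤ C := by
  match t, h1 with
  | 1, _ => simpa [iteratedDeriv_one] using hC
  | (s+2), _ =>
    rw [iteratedDeriv_succ', show deriv (id : ℝ → ℝ) = fun _ : ℝ => (1:ℝ) from
      funext fun y => deriv_id y, iteratedDeriv_const_fun]
    simpa using le_trans zero_le_one hC

lemma sum_Icc_one (d : ℕ → ℝ) (K : ℕ) :
    ∑ j ∈ Finset.Icc 1 K, d j = ∑ j ∈ Finset.range K, d (j+1) := by
  induction K with
  | zero => simp
  | succ K ih => rw [Finset.sum_range_succ, ← ih, Finset.sum_Icc_succ_top (by omega)]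

/-- Lemma A.2 (the `C^m` Approximation Lemma). -/
theorem cm_approximation_lemma (m : ℕ) (hm : 1 ≤ m) (M : ℝ) (hM : 0 < M) :
    ∃ εM CM : ℝ, 0 < εM ∧ 0 < CM ∧
    ∀ ε : ℝ, 0 < ε → ε ≤ εM →
    ∀ (n : ℕ) (lo hi : ℕ → ℝ) (f g : ℕ → ℝ → ℝ),
      (∀ i, 1 ≤ i → i ≤ n + 1 → lo i ≤ hi i) →
      (∀ i, 1 ≤ i → i ≤ n →
        ContDiff ℝ m (f i) ∧ ContDiff ℝ m (g i) ∧
        Set.MapsTo (f i) (Set.Icc (lo i) (hi i)) (Set.Icc (lo (i + 1)) (hi (i + 1))) ∧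
        Set.MapsTo (g i) (Set.Icc (lo i) (hi i)) (Set.Icc (lo (i + 1)) (hi (i + 1)))) →
      (∀ j k, 1 ≤ j → j ≤ k → k ≤ n →
        cknorm m (Set.Icc (lo j) (hi j)) (chainFrom f j (k - j)) ≤ M) →
      (∑ i ∈ Finset.Icc 1 n, cknorm m (Set.Icc (lo i) (hi i)) (f i - g i)) < ε →
      ∀ k, 1 ≤ k → k ≤ n →
        cknorm (m - 1) (Set.Icc (lo 1) (hi 1)) (chainFrom g 1 (k - 1)) ≤ 2 * M ∧
        cknorm (m - 1) (Set.Icc (lo 1) (hi 1))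
            (chainFrom f 1 (k - 1) - chainFrom g 1 (k - 1)) ≤
          CM * ∑ j ∈ Finset.Icc 1 k, cknorm m (Set.Icc (lo j) (hi j)) (f j - g j) := by
  obtain ⟨m', rfl⟩ : ∃ m', m = m' + 1 := ⟨m - 1, by omega⟩
  -- constants
  have hBin0 : (0:ℝ) ≤ max (2*M) 1 := le_trans zero_le_one (le_max_right _ _)
  have hBin1 : (1:ℝ) ≤ max (2*M) 1 := le_max_right _ _
  set Bin : ℝ := max (2*M) 1 with hBindef
  set csm : ℝ := ccomp m' Bin with hcsmdef
  have hcsm1 : 1 ≤ csm := one_le_ccomp m' hBin0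
  have hcsm0 : 0 ≤ csm := le_trans zero_le_one hcsm1
  have hAout0 : (0:ℝ) ≤ max M 1 := le_trans zero_le_one (le_max_right _ _)
  set Aout : ℝ := max M 1 with hAoutdef
  set Bv : ℝ := 2*M*csm with hBvdef
  have hBv0 : 0 ≤ Bv := by positivity
  have hld0 : 0 ≤ ldiff m' Aout Bv := ldiff_nonneg _ hAout0 hBv0
  set CM : ℝ := (ldiff m' Aout Bv + 1) * csm with hCMdef
  have hCM1 : 1 ≤ CM := by nlinarith
  have hCM0 : (0:ℝ) < CM := by linarith
  refine ⟨min M (M / CM), CM, lt_min hM (div_pos hM hCM0), hCM0, ?_⟩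
  intro ε hε hεM n lo hi f g hlohi hreg hFa hsum k hk1 hkn
  obtain ⟨k, rfl⟩ : ∃ k', k = k' + 1 := ⟨k - 1, by omega⟩
  simp only [Nat.add_sub_cancel]
  -- basic regularity facts
  have hf : ∀ i, 1 ≤ i → i ≤ n → ContDiff ℝ ((m'+1 : ℕ)) (f i) := fun i h1 h2 => (hreg i h1 h2).1
  have hg : ∀ i, 1 ≤ i → i ≤ n → ContDiff ℝ ((m'+1 : ℕ)) (g i) := fun i h1 h2 => (hreg i h1 h2).2.1
  have hmf := fun i h1 h2 => (hreg i h1 h2).2.2.1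
  have hmg := fun i h1 h2 => (hreg i h1 h2).2.2.2
  have hm'le : ((m' : ℕ) : WithTop ℕ∞) ≤ ((m'+1 : ℕ) : WithTop ℕ∞) := by
    exact_mod_cast Nat.le_succ m'
  set δ : ℕ → ℝ := fun j => cknorm (m'+1) (Set.Icc (lo j) (hi j)) (f j - g j) with hδdef
  have hδ0 : ∀ j, 0 ≤ δ j := fun j => cknorm_nonneg _ _ _
  have hδsum : ∀ j, 1 ≤ j → j ≤ n → δ j ≤ ∑ i ∈ Finset.Icc 1 n, δ i := fun j h1 h2 =>
    Finset.single_le_sum (fun i _ => hδ0 i) (Finset.mem_Icc.mpr ⟨h1, h2⟩)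
  have hδM : ∀ j, 1 ≤ j → j ≤ n → δ j ≤ M := fun j h1 h2 =>
    le_of_lt (lt_of_le_of_lt (hδsum j h1 h2) (lt_of_lt_of_le hsum
      (hεM.trans (min_le_left _ _))))
  have hSM : (∑ i ∈ Finset.Icc 1 n, δ i) ≤ M / CM :=
    le_of_lt (lt_of_lt_of_le hsum (hεM.trans (min_le_right _ _)))
  -- pointwise bounds for chains of f
  have hFp : ∀ j k2, 1 ≤ j → j ≤ k2 → k2 ≤ n → ∀ t ≤ m'+1,
      ∀ x ∈ Set.Icc (lo j) (hi j), |iteratedDeriv t (ech f j (k2 - j + 1)) x| ≤ M := by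
    intro j k2 h1 h2 h3 t ht x hx
    have hcd : ContDiff ℝ ((m'+1 : ℕ)) (ech f j (k2 - j + 1)) :=
      ech_contDiff f j (k2 - j + 1) (fun i hi1 hi2 => hf i (by omega) (by omega))
    rw [ech_succ_chain f j (k2 - j)] at hcd ⊢
    exact (le_cknorm (m := m'+1) hcd ht hx).trans (hFa j k2 h1 h2 h3)
  -- pointwise bounds for single f's and g's and differences
  have hfA : ∀ i, 1 ≤ i → i ≤ n → ∀ t ≤ m'+1, ∀ y ∈ Set.Icc (lo i) (hi i),
      |iteratedDeriv t (f i) y| ≤ M := by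
    intro i h1 h2 t ht y hy
    have := hFp i i h1 le_rfl h2 t ht y hy
    rwa [show i - i + 1 = 1 from by omega, ech_one] at this
  have hsubA : ∀ i, 1 ≤ i → i ≤ n → ∀ t ≤ m'+1, ∀ y ∈ Set.Icc (lo i) (hi i),
      |iteratedDeriv t (f i - g i) y| ≤ δ i := by
    intro i h1 h2 t ht y hy
    exact le_cknorm ((hf i h1 h2).sub (hg i h1 h2)) ht hy
  have hgA : ∀ i, 1 ≤ i → i ≤ n → ∀ t ≤ m'+1, ∀ y ∈ Set.Icc (lo i) (hi i),
      |iteratedDeriv t (g i) y| ≤ 2*M := by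
    intro i h1 h2 t ht y hy
    have e := iteratedDeriv_sub_apply' (t := t) ((hf i h1 h2).of_le (by exact_mod_cast ht))
      ((hg i h1 h2).of_le (by exact_mod_cast ht)) y
    have e' : iteratedDeriv t (g i) y
        = iteratedDeriv t (f i) y - iteratedDeriv t (f i - g i) y := by
      rw [show (f i - g i) = fun z => f i z - g i z from rfl, e]; ring
    rw [e']
    have h3 := hfA i h1 h2 t ht y hy
    have h4 := hsubA i h1 h2 t ht y hy
    have h5 := hδM i h1 h2
    calc |iteratedDeriv t (f i) y - iteratedDeriv t (f i - g i) y|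
        ≤ |iteratedDeriv t (f i) y| + |iteratedDeriv t (f i - g i) y| := abs_sub_le' _ _
      _ ≤ M + M := add_le_add h3 (h4.trans h5)
      _ = 2*M := by ring
  -- the key strong induction
  have key : ∀ K, K ≤ n →
      ((1 ≤ K → ∀ t ≤ m', ∀ x ∈ Set.Icc (lo 1) (hi 1),
        |iteratedDeriv t (ech g 1 K) x| ≤ 2*M) ∧
      (∀ t ≤ m', ∀ x ∈ Set.Icc (lo 1) (hi 1),
        |iteratedDeriv t (fun y => ech f 1 K y - ech g 1 K y) x|
          ≤ CM * ∑ j ∈ Finset.range K, δ (j+1))) := by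
    intro K
    induction K using Nat.strong_induction_on with
    | _ K IH =>
    intro hKn
    match K with
    | 0 =>
      constructor
      · intro h; omega
      · intro t ht x hx
        have : (fun y => ech f 1 0 y - ech g 1 0 y) = fun _ : ℝ => (0:ℝ) := by
          funext y; simp [ech]
        rw [this, iteratedDeriv_zero_fun]
        simp
    | (k'+1) =>
      -- inner chain bounds
      have hGin : ∀ j, j ≤ k' → ∀ t, 1 ≤ t → t ≤ m' → ∀ x ∈ Set.Icc (lo 1) (hi 1),
          |iteratedDeriv t (ech g 1 j) x| ≤ Bin := by
        intro j hj t h1 h2 x hx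
        match j with
        | 0 => exact abs_iteratedDeriv_id_le h1 hBin1 x
        | (j+1) =>
          have := (IH (j+1) (by omega) (by omega)).1 (by omega) t (by omega) x hx
          exact this.trans (le_max_left _ _)
      have hGcd : ∀ j, j ≤ n → ContDiff ℝ ((m'+1 : ℕ)) (ech g 1 j) := fun j hj =>
        ech_contDiff g 1 j (fun i h1 h2 => hg i (by omega) (by omega))
      have hGmap : ∀ j, j ≤ n → Set.MapsTo (ech g 1 j) (Set.Icc (lo 1) (hi 1))
          (Set.Icc (lo (j+1)) (hi (j+1))) := by
        intro j hj
        have h := ech_maps g lo hi 1 j (fun i h1 h2 => hmg i (by omega) (by omega))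
        rwa [show 1 + j = j + 1 from by omega] at h
      -- per-term bound in the telescoping sum
      have term_bd : ∀ j, j ≤ k' → ∀ t ≤ m', ∀ x ∈ Set.Icc (lo 1) (hi 1),
          |iteratedDeriv t (fun y => ech f (j+2) (k'-j) (f (j+1) (ech g 1 j y))
            - ech f (j+2) (k'-j) (g (j+1) (ech g 1 j y))) x| ≤ CM * δ (j+1) := by
        intro j hj
        have hj1n : j + 1 ≤ n := by omega
        have Gcd : ContDiff ℝ ((m'+1 : ℕ)) (ech g 1 j) := hGcd j (by omega)
        have Gcd' : ContDiff ℝ ((m' : ℕ)) (ech g 1 j) := Gcd.of_le hm'le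
        have Gmap := hGmap j (by omega)
        have GBin := hGin j hj
        -- outer chain Φ
        have hPhiCd : ContDiff ℝ ((m'+1 : ℕ)) (ech f (j+2) (k'-j)) :=
          ech_contDiff f (j+2) (k'-j) (fun i h1 h2 => hf i (by omega) (by omega))
        have hPhiA : ∀ t, 1 ≤ t → t ≤ m'+1 → ∀ y ∈ Set.Icc (lo (j+2)) (hi (j+2)),
            |iteratedDeriv t (ech f (j+2) (k'-j)) y| ≤ Aout := by
          intro t h1 h2 y hy
          rcases Nat.eq_zero_or_pos (k'-j) with h0 | hpos
          · rw [h0]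
            exact abs_iteratedDeriv_id_le h1 (le_max_right _ _) y
          · obtain ⟨c, hc⟩ : ∃ c, k'-j = c+1 := ⟨k'-j-1, by omega⟩
            rw [hc]
            have := hFp (j+2) (k'+1) (by omega) (by omega) (by omega) t h2 y hy
            rw [show (k'+1) - (j+2) + 1 = c + 1 from by omega] at this
            exact this.trans (le_max_left _ _)
        -- ContDiff of v and w
        have hfj : ContDiff ℝ ((m'+1 : ℕ)) (f (j+1)) := hf (j+1) (by omega) hj1n
        have hgj : ContDiff ℝ ((m'+1 : ℕ)) (g (j+1)) := hg (j+1) (by omega) hj1n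
        have hvCd : ContDiff ℝ ((m' : ℕ)) (fun y => f (j+1) (ech g 1 j y)) :=
          (hfj.of_le hm'le).comp Gcd'
        have hwCd : ContDiff ℝ ((m' : ℕ)) (fun y => g (j+1) (ech g 1 j y)) :=
          (hgj.of_le hm'le).comp Gcd'
        have hvmap : Set.MapsTo (fun y => f (j+1) (ech g 1 j y)) (Set.Icc (lo 1) (hi 1))
            (Set.Icc (lo (j+2)) (hi (j+2))) := (hmf (j+1) (by omega) hj1n).comp Gmap
        have hwmap : Set.MapsTo (fun y => g (j+1) (ech g 1 j y)) (Set.Icc (lo 1) (hi 1))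
            (Set.Icc (lo (j+2)) (hi (j+2))) := (hmg (j+1) (by omega) hj1n).comp Gmap
        -- derivative bounds for v and w
        have hvB := comp_bound m' (f (j+1)) (ech g 1 j) (Set.Icc (lo 1) (hi 1))
          (Set.Icc (lo (j+1)) (hi (j+1))) M Bin (hfj.of_le hm'le) Gcd' Gmap
          (fun t ht y hy => hfA (j+1) (by omega) hj1n t (by omega) y hy)
          GBin hM.le hBin0
        have hwB := comp_bound m' (g (j+1)) (ech g 1 j) (Set.Icc (lo 1) (hi 1))
          (Set.Icc (lo (j+1)) (hi (j+1))) (2*M) Bin (hgj.of_le hm'le) Gcd' Gmap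
          (fun t ht y hy => hgA (j+1) (by omega) hj1n t (by omega) y hy)
          GBin (by positivity) hBin0
        -- bound on the difference v - w
        have hδ'B := comp_bound m' (f (j+1) - g (j+1)) (ech g 1 j) (Set.Icc (lo 1) (hi 1))
          (Set.Icc (lo (j+1)) (hi (j+1))) (δ (j+1)) Bin ((hfj.sub hgj).of_le hm'le) Gcd' Gmap
          (fun t ht y hy => hsubA (j+1) (by omega) hj1n t (by omega) y hy)
          GBin (hδ0 _) hBin0
        have hδhyp : ∀ t ≤ m', ∀ x ∈ Set.Icc (lo 1) (hi 1),
            |iteratedDeriv t (fun y => f (j+1) (ech g 1 j y) - g (j+1) (ech g 1 j y)) x|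
              ≤ δ (j+1) * csm := fun t ht x hx => hδ'B t ht x hx
        -- apply the main difference estimate
        have db := diff_bound m' (ech f (j+2) (k'-j)) (fun y => f (j+1) (ech g 1 j y))
          (fun y => g (j+1) (ech g 1 j y)) (Set.Icc (lo 1) (hi 1))
          (Set.Icc (lo (j+2)) (hi (j+2))) Aout Bv (δ (j+1) * csm)
          (convex_Icc _ _) hPhiCd hvCd hwCd hvmap hwmap hPhiA
          (fun t h1 h2 x hx => (hvB t h2 x hx).trans (by nlinarith))
          (fun t h1 h2 x hx => (hwB t h2 x hx).trans (by nlinarith))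
          hδhyp hAout0 hBv0 (mul_nonneg (hδ0 _) hcsm0)
        intro t ht x hx
        have := db t ht x hx
        refine this.trans ?_
        rw [hCMdef]
        nlinarith [hδ0 (j+1)]
      -- telescoping identity
      have hfun : (fun y => ech f 1 (k'+1) y - ech g 1 (k'+1) y)
          = fun y => ∑ j ∈ Finset.range (k'+1),
            (ech f (j+2) (k'-j) (f (j+1) (ech g 1 j y))
              - ech f (j+2) (k'-j) (g (j+1) (ech g 1 j y))) := by
        funext y
        have tele := Finset.sum_range_sub'
          (f := fun j => ech f (j+1) (k'+1-j) (ech g 1 j y)) (n := k'+1)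
        have e0 : ech f (0+1) (k'+1-0) (ech g 1 0 y) = ech f 1 (k'+1) y := by norm_num [ech]
        have e1 : ech f ((k'+1)+1) (k'+1-(k'+1)) (ech g 1 (k'+1) y) = ech g 1 (k'+1) y := by
          rw [show k'+1-(k'+1) = 0 from by omega]
          rfl
        rw [e0, e1] at tele
        rw [← tele]
        apply Finset.sum_congr rfl
        intro j hj
        have hjk : j ≤ k' := by
          have := Finset.mem_range.mp hj; omega
        congr 1
        · rw [show k'+1-j = (k'-j)+1 from by omega, ech_split]
          rfl
        · rw [show k'+1-(j+1) = k'-j from by omega,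
            show ech g 1 (j+1) = g (1+j) ∘ ech g 1 j from rfl,
            show 1+j = j+1 from by omega]
          rfl
      -- ContDiff of each telescoping term
      have htermCd : ∀ j, j ≤ k' → ContDiff ℝ ((m' : ℕ))
          (fun y => ech f (j+2) (k'-j) (f (j+1) (ech g 1 j y))
            - ech f (j+2) (k'-j) (g (j+1) (ech g 1 j y))) := by
        intro j hj
        have hPhiCd : ContDiff ℝ ((m'+1 : ℕ)) (ech f (j+2) (k'-j)) :=
          ech_contDiff f (j+2) (k'-j) (fun i h1 h2 => hf i (by omega) (by omega))
        have Gcd' : ContDiff ℝ ((m' : ℕ)) (ech g 1 j) := (hGcd j (by omega)).of_le hm'le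
        exact (((hPhiCd.of_le hm'le).comp
            (((hf (j+1) (by omega) (by omega)).of_le hm'le).comp Gcd')).sub
          ((hPhiCd.of_le hm'le).comp
            (((hg (j+1) (by omega) (by omega)).of_le hm'le).comp Gcd')))
      -- part 2 : the difference bound
      have part2 : ∀ t ≤ m', ∀ x ∈ Set.Icc (lo 1) (hi 1),
          |iteratedDeriv t (fun y => ech f 1 (k'+1) y - ech g 1 (k'+1) y) x|
            ≤ CM * ∑ j ∈ Finset.range (k'+1), δ (j+1) := by
        intro t ht x hx
        rw [hfun, iteratedDeriv_sum_apply' (Finset.range (k'+1)) _ t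
          (fun j hj => (htermCd j (by have := Finset.mem_range.mp hj; omega)).of_le
            (by exact_mod_cast ht)) x]
        refine (Finset.abs_sum_le_sum_abs _ _).trans ?_
        rw [Finset.mul_sum]
        apply Finset.sum_le_sum
        intro j hj
        exact term_bd j (by have := Finset.mem_range.mp hj; omega) t ht x hx
      refine ⟨?_, part2⟩
      -- part 1 : the bound on the g-chain
      intro _ t ht x hx
      have hFcd : ContDiff ℝ ((m'+1 : ℕ)) (ech f 1 (k'+1)) :=
        ech_contDiff f 1 (k'+1) (fun i h1 h2 => hf i (by omega) (by omega))
      have hGcd' := hGcd (k'+1) hKn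
      have e := iteratedDeriv_sub_apply' (t := t)
        (hFcd.of_le (by exact_mod_cast Nat.le_succ_of_le ht))
        (hGcd'.of_le (by exact_mod_cast Nat.le_succ_of_le ht)) x
      have e' : iteratedDeriv t (ech g 1 (k'+1)) x
          = iteratedDeriv t (ech f 1 (k'+1)) x
            - iteratedDeriv t (fun y => ech f 1 (k'+1) y - ech g 1 (k'+1) y) x := by
        rw [e]; ring
      have hF : |iteratedDeriv t (ech f 1 (k'+1)) x| ≤ M := by
        have := hFp 1 (k'+1) (by omega) (by omega) hKn t (by omega) x hx
        rwa [show (k'+1) - 1 + 1 = k'+1 from by omega] at this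
      have hD := part2 t ht x hx
      have hS : ∑ j ∈ Finset.range (k'+1), δ (j+1) ≤ M / CM := by
        have heq : ∑ j ∈ Finset.Icc 1 (k'+1), δ j = ∑ j ∈ Finset.range (k'+1), δ (j+1) :=
          sum_Icc_one δ (k'+1)
        rw [← heq]
        refine le_trans ?_ hSM
        apply Finset.sum_le_sum_of_subset_of_nonneg
        · intro i hi2
          simp only [Finset.mem_Icc] at *
          omega
        · intro i _ _; exact hδ0 i
      have hD' : |iteratedDeriv t (fun y => ech f 1 (k'+1) y - ech g 1 (k'+1) y) x| ≤ M := by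
        refine hD.trans ?_
        calc CM * ∑ j ∈ Finset.range (k'+1), δ (j+1) ≤ CM * (M / CM) :=
              mul_le_mul_of_nonneg_left hS (le_of_lt hCM0)
          _ = M := by field_simp
      rw [e']
      calc |iteratedDeriv t (ech f 1 (k'+1)) x
            - iteratedDeriv t (fun y => ech f 1 (k'+1) y - ech g 1 (k'+1) y) x|
          ≤ |iteratedDeriv t (ech f 1 (k'+1)) x|
            + |iteratedDeriv t (fun y => ech f 1 (k'+1) y - ech g 1 (k'+1) y) x| := abs_sub_le' _ _
        _ ≤ M + M := add_le_add hF hD'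
        _ = 2*M := by ring
  -- conclude
  have hkey := key (k+1) hkn
  have hch : chainFrom g 1 k = ech g 1 (k+1) := (ech_succ_chain g 1 k).symm
  have hchf : chainFrom f 1 k = ech f 1 (k+1) := (ech_succ_chain f 1 k).symm
  have hsum_eq : ∑ j ∈ Finset.Icc 1 (k+1), δ j = ∑ j ∈ Finset.range (k+1), δ (j+1) :=
    sum_Icc_one δ (k+1)
  constructor
  · rw [hch]
    apply cknorm_le (by positivity)
    intro t ht x hx
    exact hkey.1 (by omega) t ht x hx
  · rw [hchf, hch]
    apply cknorm_le
    · apply mul_nonneg (le_of_lt hCM0)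
      exact Finset.sum_nonneg fun j _ => cknorm_nonneg _ _ _
    · intro t ht x hx
      have h2 := hkey.2 t ht x hx
      rw [hsum_eq]
      exact h2
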